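/- For every γ-almost-fixed-length hypothesis test at blocklength n (a stopping time τ with τ ≤ c·n^l, decision events A₁^τ, A₂^τ, and P_i(τ > n) ≤ e^{−γn} for i ∈ {1,2}), there exists a fixed-length test with rejection at blocklength n whose error probabilities satisfy P₁(A₂^n) ≤ P₁(A₂^τ) and P₂(A₁^n) ≤ P₂(A₁^τ), and whose rejection region satisfies P₁(A_Ω^n) ≤ e^{−γn} and P₂(A_Ω^n) ≤ e^{−γn}. -/

import Mathlib

/-!
Run the sequential test on the `n` available samples, padded arbitrarily: if it stops by time `n`
its decision only depends on those samples, and otherwise we reject. On a common sample path of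
length `n + N`, whose first `n` and first `N` letters again carry the product laws, each
fixed-length error event is contained in the corresponding sequential one, and rejection forces
`τ > n`.
-/

open Real Filter Finset MeasureTheory
open scoped Classical

variable {𝒳 : Type*} [Fintype 𝒳] [DecidableEq 𝒳] [Nonempty 𝒳]

/-- Kullback–Leibler divergence `D(Q‖P)` between pmfs on a finite alphabet. -/
noncomputable def kl (Q P : 𝒳 → ℝ) : ℝ :=
  ∑ x, Q x * Real.log (Q x / P x)

/-- The `λ`-tilted distribution `P^(λ)` of `P₁` and `P₂`. -/
noncomputable def tilt (P₁ P₂ : 𝒳 → ℝ) (l : ℝ) : 𝒳 → ℝ :=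
  fun x => P₁ x ^ (1 - l) * P₂ x ^ l / ∑ a, P₁ a ^ (1 - l) * P₂ a ^ l

/-- Probability of a set of length-`N` sample paths under i.i.d. sampling from `P`. -/
noncomputable def prodProb (P : 𝒳 → ℝ) {N : ℕ} (S : Set (Fin N → 𝒳)) : ℝ :=
  ∑ ω : Fin N → 𝒳, S.indicator (fun ω' => ∏ i, P (ω' i)) ω

/-- The fixed-length error-exponent region `R_FD`. -/
def RFD (P₁ P₂ : 𝒳 → ℝ) : Set (ℝ × ℝ) :=
  {p | 0 ≤ p.1 ∧ 0 ≤ p.2 ∧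
    ∃ l ∈ Set.Icc (0:ℝ) 1,
      p.1 ≤ kl (tilt P₁ P₂ l) P₁ ∧ p.2 ≤ kl (tilt P₁ P₂ l) P₂}

/-- `E₁(γ) = max{D(P^(λ)‖P₁) : λ ∈ [0,1], D(P^(λ)‖P₂) ≥ γ}` (sup of the empty set is 0). -/
noncomputable def E1exp (P₁ P₂ : 𝒳 → ℝ) (γ : ℝ) : ℝ :=
  sSup {E | ∃ l ∈ Set.Icc (0:ℝ) 1, γ ≤ kl (tilt P₁ P₂ l) P₂ ∧ E = kl (tilt P₁ P₂ l) P₁}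

/-- `E₂(γ) = max{D(P^(λ)‖P₂) : λ ∈ [0,1], D(P^(λ)‖P₁) ≥ γ}` (sup of the empty set is 0). -/
noncomputable def E2exp (P₁ P₂ : 𝒳 → ℝ) (γ : ℝ) : ℝ :=
  sSup {E | ∃ l ∈ Set.Icc (0:ℝ) 1, γ ≤ kl (tilt P₁ P₂ l) P₁ ∧ E = kl (tilt P₁ P₂ l) P₂}

/-- A sequential hypothesis test whose stopping time is bounded by `N`:
a stopping time `τ` for the coordinate filtration, together with decision events
`A1`, `A2` that are determined by the samples observed up to time `τ`,
are disjoint, and exhaust the sample space. -/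
structure HypTest (𝒳 : Type*) (N : ℕ) where
  τ : (Fin N → 𝒳) → ℕ
  A1 : Set (Fin N → 𝒳)
  A2 : Set (Fin N → 𝒳)
  tau_le : ∀ ω, τ ω ≤ N
  stopping : ∀ ω ω', (∀ i : Fin N, (i : ℕ) < τ ω → ω i = ω' i) → τ ω' = τ ω
  adapted1 : ∀ ω ω', (∀ i : Fin N, (i : ℕ) < τ ω → ω i = ω' i) → (ω ∈ A1 ↔ ω' ∈ A1)
  adapted2 : ∀ ω ω', (∀ i : Fin N, (i : ℕ) < τ ω → ω i = ω' i) → (ω ∈ A2 ↔ ω' ∈ A2)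
  disj : Disjoint A1 A2
  exhaust : A1 ∪ A2 = Set.univ

/-- `(E₁, E₂)` is achievable by `γ`-almost-fixed-length tests. -/
def AFLAchievable (P₁ P₂ : 𝒳 → ℝ) (γ E₁ E₂ : ℝ) : Prop :=
  0 ≤ E₁ ∧ 0 ≤ E₂ ∧
  ∃ c : ℝ, 0 < c ∧ ∃ l : ℕ, 0 < l ∧
    ∀ δ : ℝ, 0 < δ → ∃ n₀ : ℕ, ∀ n : ℕ, n₀ ≤ n →
      ∃ N : ℕ, (N : ℝ) ≤ c * (n : ℝ) ^ l ∧
        ∃ T : HypTest 𝒳 N,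
          prodProb P₁ {ω | n < T.τ ω} ≤ Real.exp (-(γ * n)) ∧
          prodProb P₂ {ω | n < T.τ ω} ≤ Real.exp (-(γ * n)) ∧
          prodProb P₁ T.A2 ≤ Real.exp (-((E₁ - δ) * n)) ∧
          prodProb P₂ T.A1 ≤ Real.exp (-((E₂ - δ) * n))

/-- `(E₁, E₂, E_Ω)` is achievable by fixed-length tests with a rejection option. -/
def RejAchievable (P₁ P₂ : 𝒳 → ℝ) (E₁ E₂ EΩ : ℝ) : Prop :=
  0 ≤ E₁ ∧ 0 ≤ E₂ ∧ 0 ≤ EΩ ∧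
  ∀ δ : ℝ, 0 < δ → ∃ n₀ : ℕ, ∀ n : ℕ, n₀ ≤ n →
    ∃ A1 A2 AΩ : Set (Fin n → 𝒳),
      Disjoint A1 A2 ∧ Disjoint A1 AΩ ∧ Disjoint A2 AΩ ∧ A1 ∪ A2 ∪ AΩ = Set.univ ∧
      prodProb P₁ A2 ≤ Real.exp (-((E₁ - δ) * n)) ∧
      prodProb P₂ A1 ≤ Real.exp (-((E₂ - δ) * n)) ∧
      prodProb P₁ AΩ + prodProb P₂ AΩ ≤ Real.exp (-((EΩ - δ) * n))

/-- Sum of the log-likelihood ratios of the first `n` samples. -/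
noncomputable def S1 (P₁ P₂ : 𝒳 → ℝ) (n : ℕ) {N : ℕ} (ω : Fin N → 𝒳) : ℝ :=
  ∑ i ∈ Finset.univ.filter (fun i : Fin N => (i : ℕ) < n),
    Real.log (P₁ (ω i) / P₂ (ω i))

/-- Sum of the log-likelihood ratios of the samples after time `n`. -/
noncomputable def S2 (P₁ P₂ : 𝒳 → ℝ) (n : ℕ) {N : ℕ} (ω : Fin N → 𝒳) : ℝ :=
  ∑ i ∈ Finset.univ.filter (fun i : Fin N => n ≤ (i : ℕ)),
    Real.log (P₁ (ω i) / P₂ (ω i))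

/-- Event that the two-phase test (phase-one thresholds `α₁ > β₁`, phase-two threshold `α`)
chooses `H₁`. -/
def twoPhaseA1 (P₁ P₂ : 𝒳 → ℝ) (k n : ℕ) (α₁ β₁ α : ℝ) : Set (Fin ((k + 1) * n) → 𝒳) :=
  {ω | α₁ ≤ S1 P₁ P₂ n ω / n ∨
    (β₁ < S1 P₁ P₂ n ω / n ∧ S1 P₁ P₂ n ω / n < α₁ ∧ α ≤ S2 P₁ P₂ n ω / (k * n))}

/-- Event that the two-phase test chooses `H₂`. -/
def twoPhaseA2 (P₁ P₂ : 𝒳 → ℝ) (k n : ℕ) (α₁ β₁ α : ℝ) : Set (Fin ((k + 1) * n) → 𝒳) :=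
  {ω | S1 P₁ P₂ n ω / n ≤ β₁ ∨
    (β₁ < S1 P₁ P₂ n ω / n ∧ S1 P₁ P₂ n ω / n < α₁ ∧ S2 P₁ P₂ n ω / (k * n) < α)}

/-- Stopping time of the two-phase test: `n` if phase one is decisive, `(k+1)n` otherwise. -/
noncomputable def twoPhaseTau (P₁ P₂ : 𝒳 → ℝ) (k n : ℕ) (α₁ β₁ : ℝ)
    (ω : Fin ((k + 1) * n) → 𝒳) : ℕ :=
  if β₁ < S1 P₁ P₂ n ω / n ∧ S1 P₁ P₂ n ω / n < α₁ then (k + 1) * n else n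

section Paths
omit [DecidableEq 𝒳] [Nonempty 𝒳]

variable {P : 𝒳 → ℝ}

lemma prodProb_mono (hP : ∀ x, 0 ≤ P x) {N : ℕ} {S S' : Set (Fin N → 𝒳)} (h : S ⊆ S') :
    prodProb P S ≤ prodProb P S' :=
  Finset.sum_le_sum fun ω _ =>
    Set.indicator_le_indicator_of_subset h (fun _ => Finset.prod_nonneg fun _ _ => hP _) ω

lemma prodProb_preimage_take (hP : ∑ x, P x = 1) {m M : ℕ} (h : m ≤ M)
    (S : Set (Fin m → 𝒳)) :
    prodProb P (Fin.take m h ⁻¹' S) = prodProb P S := by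
  obtain ⟨k, rfl⟩ := Nat.exists_eq_add_of_le h
  unfold prodProb
  rw [← (Fin.appendEquiv m k).sum_comp, Fintype.sum_prod_type]
  refine Finset.sum_congr rfl fun u _ => ?_
  have htake : ∀ v : Fin k → 𝒳, Fin.take m h (Fin.append u v) = u := fun v => by
    rw [Fin.take_append_left m le_rfl, Fin.take_eq_self]
  simp only [Fin.appendEquiv, Equiv.coe_fn_mk, Set.indicator_apply, Set.mem_preimage, htake,
    Fin.prod_univ_add, Fin.append_left, Fin.append_right]
  split_ifs
  · rw [← Finset.mul_sum, ← Fintype.sum_pow, hP, one_pow, mul_one]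
  · exact Finset.sum_const_zero

lemma prodProb_le_of_take_mem (hP₀ : ∀ x, 0 ≤ P x) (hP₁ : ∑ x, P x = 1) {n N : ℕ}
    {S : Set (Fin n → 𝒳)} {S' : Set (Fin N → 𝒳)}
    (h : ∀ ω : Fin (n + N) → 𝒳, Fin.take n (Nat.le_add_right n N) ω ∈ S →
      Fin.take N (Nat.le_add_left N n) ω ∈ S') :
    prodProb P S ≤ prodProb P S' := by
  rw [← prodProb_preimage_take hP₁ (Nat.le_add_right n N),
    ← prodProb_preimage_take hP₁ (Nat.le_add_left N n)]
  exact prodProb_mono hP₀ h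

end Paths

section Truncation
omit [Fintype 𝒳] [DecidableEq 𝒳]

/-- The padding letters are arbitrary: a test that stops by time `n` never reads them. -/
noncomputable def padPath {n : ℕ} (N : ℕ) (ω : Fin n → 𝒳) : Fin N → 𝒳 :=
  fun i => if h : (i : ℕ) < n then ω ⟨i, h⟩ else Classical.arbitrary 𝒳

lemma padPath_take_of_lt {n N M : ℕ} (hn : n ≤ M) (hN : N ≤ M) (ω : Fin M → 𝒳) (i : Fin N)
    (hi : (i : ℕ) < n) : padPath N (Fin.take n hn ω) i = Fin.take N hN ω i := by
  simp only [padPath, dif_pos hi, Fin.take_apply, Fin.castLE]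

namespace HypTest

variable {N : ℕ} (T : HypTest 𝒳 N) (n : ℕ)

def decidedBy (A : Set (Fin N → 𝒳)) : Set (Fin n → 𝒳) :=
  {ω | T.τ (padPath N ω) ≤ n ∧ padPath N ω ∈ A}

def undecidedAt : Set (Fin n → 𝒳) :=
  {ω | n < T.τ (padPath N ω)}

variable {n}

omit [Nonempty 𝒳] in
lemma lt_tau_of_lt_of_agree {ω ω' : Fin N → 𝒳} (hω : n < T.τ ω)
    (h : ∀ i : Fin N, (i : ℕ) < n → ω i = ω' i) : n < T.τ ω' := by
  by_contra! hω'
  have := T.stopping ω' ω fun i hi => (h i (hi.trans_le hω')).symm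
  omega

lemma disjoint_decidedBy {A B : Set (Fin N → 𝒳)} (h : Disjoint A B) :
    Disjoint (T.decidedBy n A) (T.decidedBy n B) :=
  Set.disjoint_left.2 fun _ hA hB => Set.disjoint_left.1 h hA.2 hB.2

lemma disjoint_decidedBy_undecidedAt (A : Set (Fin N → 𝒳)) :
    Disjoint (T.decidedBy n A) (T.undecidedAt n) :=
  Set.disjoint_left.2 fun _ hA hU => hA.1.not_gt hU

lemma decidedBy_union_undecidedAt {A B : Set (Fin N → 𝒳)} (h : A ∪ B = Set.univ) :
    T.decidedBy n A ∪ T.decidedBy n B ∪ T.undecidedAt n = Set.univ := by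
  refine Set.eq_univ_of_forall fun ω => ?_
  rcases le_or_gt (T.τ (padPath N ω)) n with hτ | hτ
  · rcases h.symm ▸ Set.mem_univ (padPath N ω) with hA | hB
    · exact Or.inl (Or.inl ⟨hτ, hA⟩)
    · exact Or.inl (Or.inr ⟨hτ, hB⟩)
  · exact Or.inr hτ

variable [Fintype 𝒳] {P : 𝒳 → ℝ}

lemma prodProb_decidedBy_le (hP₀ : ∀ x, 0 ≤ P x) (hP₁ : ∑ x, P x = 1) {A : Set (Fin N → 𝒳)}
    (hA : ∀ ω ω', (∀ i : Fin N, (i : ℕ) < T.τ ω → ω i = ω' i) → (ω ∈ A ↔ ω' ∈ A)) :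
    prodProb P (T.decidedBy n A) ≤ prodProb P A :=
  prodProb_le_of_take_mem hP₀ hP₁ fun _ ⟨hτ, hmem⟩ =>
    (hA _ _ fun i hi => padPath_take_of_lt _ _ _ i (hi.trans_le hτ)).1 hmem

lemma prodProb_undecidedAt_le (hP₀ : ∀ x, 0 ≤ P x) (hP₁ : ∑ x, P x = 1) :
    prodProb P (T.undecidedAt n) ≤ prodProb P {ω | n < T.τ ω} :=
  prodProb_le_of_take_mem hP₀ hP₁ fun _ hω =>
    T.lt_tau_of_lt_of_agree hω fun i hi => padPath_take_of_lt _ _ _ i hi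

end HypTest

end Truncation

theorem afl_test_to_rejection_test_general (P₁ P₂ : 𝒳 → ℝ)
    (h1pos : ∀ x, 0 < P₁ x) (h2pos : ∀ x, 0 < P₂ x)
    (h1sum : ∑ x, P₁ x = 1) (h2sum : ∑ x, P₂ x = 1)
    (γ : ℝ)
    (n N : ℕ)
    (T : HypTest 𝒳 N)
    (ht1 : prodProb P₁ {ω | n < T.τ ω} ≤ Real.exp (-(γ * n)))
    (ht2 : prodProb P₂ {ω | n < T.τ ω} ≤ Real.exp (-(γ * n))) :
    ∃ A1 A2 AΩ : Set (Fin n → 𝒳),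
      Disjoint A1 A2 ∧ Disjoint A1 AΩ ∧ Disjoint A2 AΩ ∧ A1 ∪ A2 ∪ AΩ = Set.univ ∧
      prodProb P₁ A2 ≤ prodProb P₁ T.A2 ∧
      prodProb P₂ A1 ≤ prodProb P₂ T.A1 ∧
      prodProb P₁ AΩ ≤ Real.exp (-(γ * n)) ∧
      prodProb P₂ AΩ ≤ Real.exp (-(γ * n)) := by
  have h1 : ∀ x, 0 ≤ P₁ x := fun x => (h1pos x).le
  have h2 : ∀ x, 0 ≤ P₂ x := fun x => (h2pos x).le
  exact ⟨T.decidedBy n T.A1, T.decidedBy n T.A2, T.undecidedAt n,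
    T.disjoint_decidedBy T.disj, T.disjoint_decidedBy_undecidedAt _,
    T.disjoint_decidedBy_undecidedAt _, T.decidedBy_union_undecidedAt T.exhaust,
    T.prodProb_decidedBy_le h1 h1sum T.adapted2, T.prodProb_decidedBy_le h2 h2sum T.adapted1,
    (T.prodProb_undecidedAt_le h1 h1sum).trans ht1, (T.prodProb_undecidedAt_le h2 h2sum).trans ht2⟩

/-- From any γ-almost-fixed-length test one can build a fixed-length test with rejection
at blocklength `n` whose errors are no larger and whose rejection probability is at most
`e^{−γn}` under each hypothesis. -/
theorem afl_test_to_rejection_test (P₁ P₂ : 𝒳 → ℝ)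
    (h1pos : ∀ x, 0 < P₁ x) (h2pos : ∀ x, 0 < P₂ x)
    (h1sum : ∑ x, P₁ x = 1) (h2sum : ∑ x, P₂ x = 1)
    (hne : P₁ ≠ P₂)
    (γ c : ℝ) (hγ : 0 < γ) (hc : 0 < c) (l : ℕ) (hl : 0 < l)
    (n N : ℕ) (hn : 1 ≤ n) (hN : (N : ℝ) ≤ c * (n : ℝ) ^ l)
    (T : HypTest 𝒳 N)
    (ht1 : prodProb P₁ {ω | n < T.τ ω} ≤ Real.exp (-(γ * n)))
    (ht2 : prodProb P₂ {ω | n < T.τ ω} ≤ Real.exp (-(γ * n))) :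
    ∃ A1 A2 AΩ : Set (Fin n → 𝒳),
      Disjoint A1 A2 ∧ Disjoint A1 AΩ ∧ Disjoint A2 AΩ ∧ A1 ∪ A2 ∪ AΩ = Set.univ ∧
      prodProb P₁ A2 ≤ prodProb P₁ T.A2 ∧
      prodProb P₂ A1 ≤ prodProb P₂ T.A1 ∧
      prodProb P₁ AΩ ≤ Real.exp (-(γ * n)) ∧
      prodProb P₂ AΩ ≤ Real.exp (-(γ * n)) :=
  afl_test_to_rejection_test_general P₁ P₂ h1pos h2pos h1sum h2sum γ n N T ht1 ht2
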